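/- If φ is a homeomorphism of the Cantor space normalizing Thompson's group V, then φ maps the set of eventually periodic (rational) points of the Cantor space onto itself. -/
import Mathlib


/-! Basic setup: the Cantor space, prefix replacement, Thompson's group `V`,
slopes, dyadic rationals, standard dyadic partitions, locally constant maps,
and the permutation model of the twisted fraction groups `LΓ ⋊ V`. -/

abbrev Cantor : Type := ℕ → Bool

/-- Concatenation of a finite word with an infinite sequence. -/
def cat (w : List Bool) (x : Cantor) : Cantor :=
  fun n => if n < w.length then w.getD n false else x (n - w.length)

/-- The standard dyadic interval (cylinder) associated to a finite word. -/
def cyl (w : List Bool) : Set Cantor := {x | ∃ y : Cantor, x = cat w y}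

/-- Membership in Thompson's group `V`: a homeomorphism of the Cantor space which is
everywhere locally given by prefix replacement. -/
def memV (v : Cantor ≃ₜ Cantor) : Prop :=
  ∀ x : Cantor, ∃ (m w : List Bool) (y : Cantor),
    x = cat m y ∧ ∀ z : Cantor, v (cat m z) = cat w z

/-- `HasLogSlope v x k` : `k = log₂ v'(x)`, base-2 logarithm of the slope of `v` at `x`. -/
def HasLogSlope (v : Cantor ≃ₜ Cantor) (x : Cantor) (k : ℤ) : Prop :=
  ∃ (m w : List Bool) (y : Cantor),
    x = cat m y ∧ (∀ z : Cantor, v (cat m z) = cat w z) ∧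
      k = (m.length : ℤ) - (w.length : ℤ)

open Classical in
noncomputable def logSlope (v : Cantor ≃ₜ Cantor) (x : Cantor) : ℤ :=
  if h : ∃ k : ℤ, HasLogSlope v x k then h.choose else 0

/-- The eventually periodic sequence `c∞ = c·c·c⋯`. -/
def tailSeq (c : List Bool) : Cantor := fun n => c.getD (n % c.length) false

/-- `x` lies in the tail equivalence class of the word `c`, i.e. `x = y·c∞`. -/
def InTailClass (x : Cantor) (c : List Bool) : Prop :=
  ∃ y : List Bool, x = cat y (tailSeq c)

/-- `x` is eventually periodic (a rational point of the Cantor space). -/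
def EvPeriodic (x : Cantor) : Prop :=
  ∃ (y c : List Bool), c ≠ [] ∧ x = cat y (tailSeq c)

/-- A prime word: a nonempty word which is not a proper power of a word. -/
def PrimeWord (c : List Bool) : Prop :=
  c ≠ [] ∧ ∀ (d : List Bool) (k : ℕ), 2 ≤ k → c ≠ (List.replicate k d).flatten

/-- `conjH φ v = φ ∘ v ∘ φ⁻¹`. -/
def conjH (φ v : Cantor ≃ₜ Cantor) : Cantor ≃ₜ Cantor := φ.symm.trans (v.trans φ)

/-- `φ` normalizes Thompson's group `V` inside `Homeo(𝔠)` : `φ V φ⁻¹ = V`. -/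
def NormalizesV (φ : Cantor ≃ₜ Cantor) : Prop :=
  (conjH φ) '' {v | memV v} = {v | memV v}

/-- The copy of the dyadic rationals `Q₂ ⊂ 𝔠` : finitely supported sequences. -/
def InQ2 (x : Cantor) : Prop := ∃ n : ℕ, ∀ m, n ≤ m → x m = false

def zeroSeq : Cantor := fun _ => false

/-- A standard dyadic partition of the Cantor space. -/
def IsSDP (P : Finset (List Bool)) : Prop :=
  ∀ x : Cantor, ∃! w : List Bool, w ∈ P ∧ x ∈ cyl w

/-- Locally constant map: constant on each piece of some standard dyadic partition. -/
def IsLC {Γ : Type*} (f : Cantor → Γ) : Prop :=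
  ∃ P : Finset (List Bool), IsSDP P ∧ ∀ w ∈ P, ∀ y z : Cantor, f (cat w y) = f (cat w z)

/-- `h` agrees on `Q₂` with (the restriction of) a locally constant map. -/
def AgreesOnQ2WithLC {Γ : Type*} (h : Cantor → Γ) : Prop :=
  ∃ b : Cantor → Γ, IsLC b ∧ ∀ x, InQ2 x → h x = b x

section GroupPart
variable {Γ : Type*} [Group Γ]

/-- `alphaWord α₀ α₁ (m₁⋯m_k) = α_{m_k} ∘ ⋯ ∘ α_{m₁}`. -/
def alphaWord (α₀ α₁ : Γ ≃* Γ) (m : List Bool) : Γ ≃* Γ :=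
  m.foldl (fun acc b => acc.trans (if b then α₁ else α₀)) (MulEquiv.refl Γ)

open Classical in
/-- The twisting automorphism `τ_{v,x} = α_{v(I)}⁻¹ ∘ α_I` for a standard dyadic
interval `I` containing `x` and adapted to `v`. -/
noncomputable def tauEquiv (α₀ α₁ : Γ ≃* Γ) (v : Cantor ≃ₜ Cantor) (x : Cantor) : Γ ≃* Γ :=
  if h : ∃ p : List Bool × List Bool, x ∈ cyl p.1 ∧ ∀ z : Cantor, v (cat p.1 z) = cat p.2 z
  then (alphaWord α₀ α₁ h.choose.1).trans (alphaWord α₀ α₁ h.choose.2).symm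
  else MulEquiv.refl Γ

/-- The element `a·v` of the twisted `LΓ ⋊ V`, realized as the permutation
`(x,g) ↦ (v x, a(v x) · τ_{v,x}(g))` of `𝔠 × Γ`. -/
noncomputable def permOf (α₀ α₁ : Γ ≃* Γ) (a : Cantor → Γ) (v : Cantor ≃ₜ Cantor) :
    Equiv.Perm (Cantor × Γ) where
  toFun p := (v p.1, a (v p.1) * tauEquiv α₀ α₁ v p.1 p.2)
  invFun p := (v.symm p.1, (tauEquiv α₀ α₁ v (v.symm p.1)).symm ((a p.1)⁻¹ * p.2))
  left_inv := by rintro ⟨x, g⟩; simp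
  right_inv := by rintro ⟨x, g⟩; simp

end GroupPart

/-- The twisted fraction group `G = LΓ ⋊ V` of the triple `(Γ, α₀, α₁)`,
as a group of permutations of `𝔠 × Γ`. -/
noncomputable def Gsub (Γ : Type*) [Group Γ] (α₀ α₁ : Γ ≃* Γ) :
    Subgroup (Equiv.Perm (Cantor × Γ)) :=
  Subgroup.closure {p | ∃ a v, IsLC a ∧ memV v ∧ p = permOf α₀ α₁ a v}

/-- The untwisted case `α₀ = α₁ = id`. -/
noncomputable def permOfU {Γ : Type*} [Group Γ] (a : Cantor → Γ) (v : Cantor ≃ₜ Cantor) :=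
  permOf (MulEquiv.refl Γ) (MulEquiv.refl Γ) a v

/-- The untwisted fraction group `G = LΓ ⋊ V`. -/
noncomputable def GsubU (Γ : Type*) [Group Γ] := Gsub Γ (MulEquiv.refl Γ) (MulEquiv.refl Γ)

/-- `f ∈ N_{K̄}(G)` : the element `f` of `K̄ = ∏_{Q₂}Γ` normalizes `G = LΓ ⋊ V`
(untwisted case), i.e. `f·a·(f^v)⁻¹` and `f⁻¹·a·f^v` are locally constant on `Q₂`. -/
def InNormKbar {Γ : Type*} [Group Γ] (f : Cantor → Γ) : Prop :=
  ∀ (a : Cantor → Γ) (v : Cantor ≃ₜ Cantor), IsLC a → memV v →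
    AgreesOnQ2WithLC (fun x => f x * a x * (f (v.symm x))⁻¹) ∧
    AgreesOnQ2WithLC (fun x => (f x)⁻¹ * a x * f (v.symm x))

section Basic

lemma cat_lt {w : List Bool} {x : Cantor} {n : ℕ} (h : n < w.length) :
    cat w x n = w.getD n false := by simp [cat, h]

lemma cat_ge {w : List Bool} {x : Cantor} {n : ℕ} (h : w.length ≤ n) :
    cat w x n = x (n - w.length) := by simp [cat, Nat.not_lt.2 h]

lemma cat_append (a b : List Bool) (z : Cantor) : cat (a ++ b) z = cat a (cat b z) := by
  funext n
  by_cases h1 : n < a.length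
  · rw [cat_lt (by simp; omega), cat_lt h1, List.getD_append _ _ _ _ h1]
  · push_neg at h1
    rw [cat_ge h1]
    by_cases h2 : n < a.length + b.length
    · rw [cat_lt (by simp; omega), cat_lt (by omega), List.getD_append_right _ _ _ _ h1]
    · push_neg at h2
      rw [cat_ge (by simp; omega), cat_ge (by omega)]
      congr 1; simp; omega

lemma cat_inj {w : List Bool} {y z : Cantor} (h : cat w y = cat w z) : y = z := by
  funext n
  have := congrFun h (n + w.length)
  rwa [cat_ge (by omega), cat_ge (by omega), Nat.add_sub_cancel] at this

def strip (w : List Bool) (x : Cantor) : Cantor := fun n => x (n + w.length)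

lemma strip_cat (w : List Bool) (z : Cantor) : strip w (cat w z) = z := by
  funext n; simp [strip, cat_ge (show w.length ≤ n + w.length by omega)]

lemma mem_cyl {x : Cantor} {w : List Bool} :
    x ∈ cyl w ↔ ∀ n < w.length, x n = w.getD n false := by
  constructor
  · rintro ⟨y, rfl⟩ n hn; exact cat_lt hn
  · intro h
    refine ⟨strip w x, funext fun n => ?_⟩
    by_cases hn : n < w.length
    · rw [cat_lt hn]; exact h n hn
    · push_neg at hn
      rw [cat_ge hn]; simp [strip]; congr 1; omega

lemma cat_mem_cyl (w : List Bool) (z : Cantor) : cat w z ∈ cyl w := ⟨z, rfl⟩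

lemma cat_strip {x : Cantor} {w : List Bool} (h : x ∈ cyl w) : cat w (strip w x) = x := by
  obtain ⟨y, rfl⟩ := h; rw [strip_cat]

lemma two_prefixes {x z : Cantor} {w : List Bool} (hx : x ∈ cyl w) (hz : z ∈ cyl w)
    {n : ℕ} (hn : n < w.length) : z n = x n := by
  rw [mem_cyl] at hx hz; rw [hx n hn, hz n hn]

lemma getD_lt {l : List Bool} {n : ℕ} (h : n < l.length) : l.getD n false = l[n] := by
  rw [List.getD_eq_getElem?_getD, List.getElem?_eq_getElem h]; rfl

lemma isClopen_cyl (w : List Bool) : IsClopen (cyl w) := by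
  have : cyl w = ⋂ (n : Fin w.length), (fun x : Cantor => x n.1) ⁻¹' {w.getD n.1 false} := by
    ext x
    rw [mem_cyl]
    simp only [Set.mem_iInter, Set.mem_preimage, Set.mem_singleton_iff]
    exact ⟨fun h n => h n.1 n.2, fun h n hn => h ⟨n, hn⟩⟩
  rw [this]
  refine ⟨isClosed_iInter fun n => ?_, isOpen_iInter_of_finite fun n => ?_⟩
  · exact IsClosed.preimage (continuous_apply n.1) (isClosed_discrete _)
  · exact IsOpen.preimage (continuous_apply n.1) (isOpen_discrete _)

lemma isOpen_cyl (w : List Bool) : IsOpen (cyl w) := (isClopen_cyl w).2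

lemma continuous_cat (w : List Bool) : Continuous (cat w) := by
  refine continuous_pi fun n => ?_
  by_cases h : n < w.length
  · simpa [cat, h] using continuous_const
  · simpa [cat, h] using continuous_apply (n - w.length)

lemma continuous_strip (w : List Bool) : Continuous (strip w) :=
  continuous_pi fun n => continuous_apply (n + w.length)

lemma tailSeq_cat {c : List Bool} (hc : c ≠ []) : cat c (tailSeq c) = tailSeq c := by
  have hl : 0 < c.length := List.length_pos_iff.2 hc
  funext n
  by_cases h : n < c.length
  · rw [cat_lt h]; simp [tailSeq, Nat.mod_eq_of_lt h]
  · push_neg at h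
    rw [cat_ge h]
    simp only [tailSeq]
    congr 1
    rw [Nat.mod_eq_sub_mod h]

lemma eq_tailSeq {c : List Bool} {y : Cantor} (hc : c ≠ []) (h : cat c y = y) :
    y = tailSeq c := by
  have hl : 0 < c.length := List.length_pos_iff.2 hc
  funext n
  induction n using Nat.strong_induction_on with
  | _ n ih =>
    by_cases hn : n < c.length
    · rw [← congrFun h n, cat_lt hn]; simp [tailSeq, Nat.mod_eq_of_lt hn]
    · push_neg at hn
      rw [← congrFun h n, cat_ge hn, ih _ (by omega)]
      simp only [tailSeq]
      congr 1
      rw [Nat.mod_eq_sub_mod hn]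

lemma split_prefix {a b : List Bool} {p q : Cantor} (h : cat a p = cat b q)
    (hl : b.length ≤ a.length) :
    a = b ++ a.drop b.length ∧ q = cat (a.drop b.length) p := by
  have hcoord : ∀ n, cat a p n = cat b q n := congrFun h
  have key : ∀ n < b.length, a.getD n false = b.getD n false := by
    intro n hn
    rw [← cat_lt (x := p) (by omega), hcoord n, cat_lt hn]
  constructor
  · nth_rewrite 1 [← List.take_append_drop b.length a]
    congr 1
    apply List.ext_getElem (by simp [hl])
    intro n h1 h2
    have h3 : n < b.length := by simpa using h2
    rw [List.getElem_take, ← getD_lt (by omega), ← getD_lt h3]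
    exact key n h3
  · funext n
    have := hcoord (n + b.length)
    rw [cat_ge (w := b) (by omega), Nat.add_sub_cancel] at this
    rw [← this]
    by_cases hn : n + b.length < a.length
    · rw [cat_lt hn, cat_lt (by simp; omega)]
      rw [getD_lt (by omega), getD_lt (l := a.drop b.length) (by simp; omega),
        List.getElem_drop]
      congr 1
      omega
    · push_neg at hn
      rw [cat_ge hn, cat_ge (by simp; omega)]
      congr 1
      simp
      omega

end Basic

section Swap

/-- Words `a` and `b` are incompatible: they differ at a common position. -/
def Incomp (a b : List Bool) : Prop :=
  ∃ n, n < a.length ∧ n < b.length ∧ a.getD n false ≠ b.getD n false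

lemma Incomp.symm {a b : List Bool} (h : Incomp a b) : Incomp b a := by
  obtain ⟨n, h1, h2, h3⟩ := h; exact ⟨n, h2, h1, Ne.symm h3⟩

lemma Incomp.disj {a b : List Bool} (h : Incomp a b) {x : Cantor}
    (hx : x ∈ cyl a) : x ∉ cyl b := by
  obtain ⟨n, h1, h2, h3⟩ := h
  intro hb
  rw [mem_cyl] at hx hb
  exact h3 ((hx n h1).symm.trans (hb n h2))

open Classical in
noncomputable def swapFun (a b : List Bool) (x : Cantor) : Cantor :=
  if x ∈ cyl a then cat b (strip a x) else if x ∈ cyl b then cat a (strip b x) else x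

lemma swapFun_of_mem_left {a b : List Bool} {x : Cantor} (hx : x ∈ cyl a) :
    swapFun a b x = cat b (strip a x) := by simp [swapFun, hx]

lemma swapFun_of_mem_right {a b : List Bool} (h : Incomp a b) {x : Cantor} (hx : x ∈ cyl b) :
    swapFun a b x = cat a (strip b x) := by
  simp [swapFun, h.symm.disj hx, hx]

lemma swapFun_of_notMem {a b : List Bool} {x : Cantor} (hxa : x ∉ cyl a) (hxb : x ∉ cyl b) :
    swapFun a b x = x := by simp [swapFun, hxa, hxb]

lemma swapFun_invol {a b : List Bool} (h : Incomp a b) (x : Cantor) :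
    swapFun a b (swapFun a b x) = x := by
  by_cases hxa : x ∈ cyl a
  · rw [swapFun_of_mem_left hxa, swapFun_of_mem_right h (cat_mem_cyl _ _), strip_cat,
      cat_strip hxa]
  · by_cases hxb : x ∈ cyl b
    · rw [swapFun_of_mem_right h hxb, swapFun_of_mem_left (cat_mem_cyl _ _), strip_cat,
        cat_strip hxb]
    · rw [swapFun_of_notMem hxa hxb, swapFun_of_notMem hxa hxb]

lemma continuous_swapFun {a b : List Bool} (h : Incomp a b) : Continuous (swapFun a b) := by
  rw [continuous_iff_continuousAt]
  intro x
  by_cases hxa : x ∈ cyl a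
  · apply ContinuousAt.congr (f := fun y => cat b (strip a y))
    · exact ((continuous_cat b).comp (continuous_strip a)).continuousAt
    · filter_upwards [(isOpen_cyl a).mem_nhds hxa] with y hy
      exact (swapFun_of_mem_left hy).symm
  · by_cases hxb : x ∈ cyl b
    · apply ContinuousAt.congr (f := fun y => cat a (strip b y))
      · exact ((continuous_cat a).comp (continuous_strip b)).continuousAt
      · filter_upwards [(isOpen_cyl b).mem_nhds hxb] with y hy
        exact (swapFun_of_mem_right h hy).symm
    · apply ContinuousAt.congr (f := id)
      · exact continuousAt_id
      · have hU : IsOpen ((cyl a ∪ cyl b)ᶜ) := by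
          rw [isOpen_compl_iff]
          exact ((isClopen_cyl a).1).union ((isClopen_cyl b).1)
        filter_upwards [hU.mem_nhds (by simp [hxa, hxb])] with y hy
        simp only [Set.mem_compl_iff, Set.mem_union, not_or] at hy
        exact (swapFun_of_notMem hy.1 hy.2).symm

noncomputable def swapH {a b : List Bool} (h : Incomp a b) : Cantor ≃ₜ Cantor where
  toFun := swapFun a b
  invFun := swapFun a b
  left_inv := swapFun_invol h
  right_inv := swapFun_invol h
  continuous_toFun := continuous_swapFun h
  continuous_invFun := continuous_swapFun h

lemma swapH_apply_left {a b : List Bool} (h : Incomp a b) (z : Cantor) :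
    swapH h (cat a z) = cat b z := by
  show swapFun a b (cat a z) = cat b z
  rw [swapFun_of_mem_left (cat_mem_cyl _ _), strip_cat]

lemma swapH_apply_right {a b : List Bool} (h : Incomp a b) (z : Cantor) :
    swapH h (cat b z) = cat a z := by
  show swapFun a b (cat b z) = cat a z
  rw [swapFun_of_mem_right h (cat_mem_cyl _ _), strip_cat]

lemma memV_swapH {a b : List Bool} (h : Incomp a b) : memV (swapH h) := by
  intro x
  by_cases hxa : x ∈ cyl a
  · exact ⟨a, b, strip a x, (cat_strip hxa).symm, fun z => swapH_apply_left h z⟩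
  · by_cases hxb : x ∈ cyl b
    · exact ⟨b, a, strip b x, (cat_strip hxb).symm, fun z => swapH_apply_right h z⟩
    · set N := max a.length b.length with hN
      set m : List Bool := List.ofFn (fun i : Fin N => x i.1) with hm
      have hmlen : m.length = N := by simp [hm]
      have hmget : ∀ n < N, m.getD n false = x n := by
        intro n hn
        have h2 : m[n]'(by omega) = x n := by simp [hm, List.getElem_ofFn]
        rw [getD_lt (by omega), h2]
      have hxm : x ∈ cyl m := by
        rw [mem_cyl]; intro n hn; rw [hmget n (by omega)]
      have hdisj : ∀ z : Cantor, cat m z ∉ cyl a ∧ cat m z ∉ cyl b := by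
        intro z
        constructor
        · intro hz
          apply hxa
          rw [mem_cyl] at hz ⊢
          intro n hn
          rw [← hmget n (by omega), ← cat_lt (x := z) (by omega)]
          exact hz n hn
        · intro hz
          apply hxb
          rw [mem_cyl] at hz ⊢
          intro n hn
          rw [← hmget n (by omega), ← cat_lt (x := z) (by omega)]
          exact hz n hn
      refine ⟨m, m, strip m x, (cat_strip hxm).symm, fun z => ?_⟩
      show swapFun a b (cat m z) = cat m z
      exact swapFun_of_notMem (hdisj z).1 (hdisj z).2

end Swap

section Comp

lemma memV_comp {u v : Cantor ≃ₜ Cantor} (hu : memV u) (hv : memV v) :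
    memV (v.trans u) := by
  intro x
  obtain ⟨m₁, w₁, y₁, hx1, hv1⟩ := hv x
  obtain ⟨m₂, w₂, y₂, hx2, hu2⟩ := hu (v x)
  have hvx : v x = cat w₁ y₁ := by rw [hx1, hv1]
  rw [hvx] at hx2
  by_cases hl : m₂.length ≤ w₁.length
  · -- w₁ = m₂ ++ d
    obtain ⟨hsplit, hy2⟩ := split_prefix hx2 hl
    set d := w₁.drop m₂.length with hd
    refine ⟨m₁, w₂ ++ d, y₁, hx1, fun z => ?_⟩
    show u (v (cat m₁ z)) = cat (w₂ ++ d) z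
    rw [hv1]
    calc u (cat w₁ z) = u (cat m₂ (cat d z)) := by rw [← cat_append, ← hsplit]
      _ = cat w₂ (cat d z) := hu2 _
      _ = cat (w₂ ++ d) z := (cat_append _ _ _).symm
  · push_neg at hl
    obtain ⟨hsplit, hy1⟩ := split_prefix hx2.symm (by omega)
    set d := m₂.drop w₁.length with hd
    refine ⟨m₁ ++ d, w₂, y₂, ?_, fun z => ?_⟩
    · rw [hx1, hy1, ← cat_append]
    · show u (v (cat (m₁ ++ d) z)) = cat w₂ z
      rw [cat_append, hv1, ← cat_append, ← hsplit, hu2]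

end Comp

section GoodFix

/-- `x` is the fixed point of an element of `V` which is not the identity on any
neighbourhood of `x`. This property characterizes rational points and is manifestly
invariant under conjugation by normalizing homeomorphisms. -/
def GoodFix (x : Cantor) : Prop :=
  ∃ v : Cantor ≃ₜ Cantor, memV v ∧ v x = x ∧
    ∀ U : Set Cantor, IsOpen U → x ∈ U → ∃ z ∈ U, v z ≠ z

lemma evPeriodic_of_goodFix {x : Cantor} (h : GoodFix x) : EvPeriodic x := by
  obtain ⟨v, hv, hfix, hnl⟩ := h
  obtain ⟨m, w, y, hx, hloc⟩ := hv x
  have hvx : cat w y = cat m y := by rw [← hloc, ← hx, hfix, hx]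
  rcases lt_trichotomy m.length w.length with hl | hl | hl
  · -- attracting-type chart : `w = m ++ d`, `x = m · d∞`
    obtain ⟨hsplit, hy⟩ := split_prefix hvx (by omega)
    set d := w.drop m.length with hd
    have hdne : d ≠ [] := by
      intro hcon
      have := congrArg List.length hcon
      simp [hd] at this
      omega
    refine ⟨m, d, hdne, ?_⟩
    rw [hx, eq_tailSeq hdne hy.symm]
  · -- equal lengths: `v` is the identity near `x`, contradiction
    exfalso
    have hwm : w = m := by
      apply List.ext_getElem hl.symm
      intro n h1 h2
      rw [← getD_lt h1, ← getD_lt h2, ← cat_lt (x := y) h1, ← cat_lt (x := y) h2, hvx]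
    obtain ⟨z, hz, hne⟩ := hnl (cyl m) (isOpen_cyl m) (hx ▸ cat_mem_cyl m y)
    obtain ⟨z', rfl⟩ := hz
    exact hne (by rw [hloc, hwm])
  · -- repelling-type chart : `m = w ++ d`, `x = m · d∞` again
    obtain ⟨hsplit, hy⟩ := split_prefix hvx.symm (by omega)
    set d := m.drop w.length with hd
    have hdne : d ≠ [] := by
      intro hcon
      have := congrArg List.length hcon
      simp [hd] at this
      omega
    refine ⟨m, d, hdne, ?_⟩
    rw [hx, eq_tailSeq hdne hy.symm]

/-- Iterated power word `c^k`. -/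
def repw (k : ℕ) (c : List Bool) : List Bool := (List.replicate k c).flatten

lemma repw_zero (c : List Bool) : repw 0 c = [] := rfl

lemma repw_succ (k : ℕ) (c : List Bool) : repw (k + 1) c = c ++ repw k c := by
  simp [repw, List.replicate_succ]

lemma cat_nil (z : Cantor) : cat [] z = z := by funext n; simp [cat]

lemma length_repw (k : ℕ) (c : List Bool) : (repw k c).length = k * c.length := by
  induction k with
  | zero => simp [repw_zero]
  | succ k ih => rw [repw_succ]; simp [ih]; ring

lemma cat_repw_tail {c : List Bool} (hc : c ≠ []) (k : ℕ) :
    cat (repw k c) (tailSeq c) = tailSeq c := by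
  induction k with
  | zero => rw [repw_zero, cat_nil]
  | succ k ih => rw [repw_succ, cat_append, ih, tailSeq_cat hc]

lemma goodFix_of_evPeriodic {x : Cantor} (h : EvPeriodic x) : GoodFix x := by
  obtain ⟨y, c, hc, hx⟩ := h
  have hcl : 0 < c.length := List.length_pos_iff.2 hc
  set L := y ++ c with hLdef
  have hL : 0 < L.length := by simp [hLdef]; omega
  set t : List Bool := L.take (L.length - 1) ++ [!L.getD (L.length - 1) false] with htdef
  have htlen : t.length = L.length := by simp [htdef]; omega
  have htget : t.getD (L.length - 1) false = !L.getD (L.length - 1) false := by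
    have : (L.take (L.length - 1) ++ [!L.getD (L.length - 1) false]).getD
        (L.length - 1) false = !L.getD (L.length - 1) false := by
      rw [getD_lt (by simp), List.getElem_append_right (by simp)]
      simp
    exact this
  have h1 : Incomp L t :=
    ⟨L.length - 1, by omega, by omega, by rw [htget]; cases L.getD (L.length - 1) false <;> simp⟩
  have h2 : Incomp t (L ++ c) := by
    refine ⟨L.length - 1, by omega, by simp; omega, ?_⟩
    have : (L ++ c).getD (L.length - 1) false = L.getD (L.length - 1) false := by
      rw [getD_lt (by simp; omega), List.getElem_append_left (by omega), getD_lt (by omega)]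
    rw [this, htget]
    cases L.getD (L.length - 1) false <;> simp
  set v : Cantor ≃ₜ Cantor := (swapH h1).trans (swapH h2) with hvdef
  have hvmem : memV v := memV_comp (memV_swapH h2) (memV_swapH h1)
  have hveval : ∀ z : Cantor, v (cat L z) = cat (L ++ c) z := by
    intro z
    rw [hvdef, Homeomorph.trans_apply, swapH_apply_left h1, swapH_apply_left h2]
  -- `x = L · c∞` and `v x = x`
  have hxL : x = cat L (tailSeq c) := by
    rw [hx]
    show cat y (tailSeq c) = cat (y ++ c) (tailSeq c)
    rw [cat_append, tailSeq_cat hc]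
  have hfix : v x = x := by
    rw [hxL, hveval]
    show cat ((y ++ c) ++ c) (tailSeq c) = cat (y ++ c) (tailSeq c)
    rw [cat_append, cat_append, tailSeq_cat hc, ← cat_append]
  refine ⟨v, hvmem, hfix, ?_⟩
  intro U hU hxU
  obtain ⟨I, u, hIu, hsub⟩ := isOpen_pi_iff.1 hU x hxU
  set n := I.sup id + 1 with hn
  have key : ∀ z : Cantor, (∀ i < n, z i = x i) → z ∈ U := by
    intro z hz
    apply hsub
    intro i hi
    have : z i = x i := hz i (by have := Finset.le_sup (f := id) hi; simp at this; omega)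
    rw [this]
    exact (hIu i hi).2
  -- the perturbed point
  set Wk : List Bool := y ++ repw (n + 1) c with hWk
  have hWklen : Wk.length = y.length + (n + 1) * c.length := by simp [hWk, length_repw]
  have hxWk : x = cat Wk (tailSeq c) := by
    rw [hx, hWk, cat_append, cat_repw_tail hc]
  set t₀ : Cantor := fun _ => !(c.getD 0 false) with ht₀
  set z₀ : Cantor := cat Wk t₀ with hz₀
  have hz₀U : z₀ ∈ U := by
    apply key
    intro i hi
    exact two_prefixes (hxWk ▸ cat_mem_cyl Wk (tailSeq c)) (cat_mem_cyl Wk t₀)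
      (show i < Wk.length by rw [hWklen]; nlinarith)
  refine ⟨z₀, hz₀U, ?_⟩
  -- compute `v z₀`
  have hsplitW : Wk = L ++ repw n c := by
    rw [hWk, hLdef, repw_succ, List.append_assoc]
  have hvz₀ : v z₀ = cat (y ++ repw (n + 2) c) t₀ := by
    have hlist : L ++ c ++ repw n c = y ++ repw (n + 2) c := by
      rw [hLdef, show n + 2 = (n + 1) + 1 from rfl, repw_succ (n + 1), repw_succ n]
      simp [List.append_assoc]
    rw [hz₀, hsplitW, cat_append, hveval, ← cat_append, hlist]
  have hxW' : x ∈ cyl (y ++ repw (n + 2) c) := by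
    have : x = cat (y ++ repw (n + 2) c) (tailSeq c) := by
      rw [hx, cat_append, cat_repw_tail hc]
    exact this ▸ cat_mem_cyl _ _
  -- evaluate at position `p`
  intro hcon
  set p := y.length + (n + 1) * c.length with hp
  have e1 : z₀ p = !(c.getD 0 false) := by
    rw [hz₀, cat_ge (by omega)]
  have e2 : v z₀ p = x p := by
    apply two_prefixes hxW' (hvz₀ ▸ cat_mem_cyl _ _)
    have hlen2 : (y ++ repw (n + 2) c).length = y.length + (n + 2) * c.length := by
      simp [length_repw]
    rw [hlen2, hp]
    nlinarith
  have e3 : x p = c.getD 0 false := by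
    rw [hx, cat_ge (by omega)]
    simp only [tailSeq]
    congr 1
    rw [hp]
    simp [Nat.mul_mod_left]
  rw [hcon] at e2
  rw [e1, e3] at e2
  cases c.getD 0 false <;> simp_all

lemma memV_of_funext {v₁ v₂ : Cantor ≃ₜ Cantor} (h : ∀ z, v₁ z = v₂ z) (hv : memV v₂) :
    memV v₁ := by
  intro x
  obtain ⟨m, w, y, hx, hl⟩ := hv x
  exact ⟨m, w, y, hx, fun z => (h _).trans (hl z)⟩

lemma goodFix_map (φ : Cantor ≃ₜ Cantor)
    (hconj : ∀ v : Cantor ≃ₜ Cantor, memV v → memV (conjH φ v))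
    {x : Cantor} (h : GoodFix x) : GoodFix (φ x) := by
  obtain ⟨v, hv, hfix, hnl⟩ := h
  have happ : ∀ z, conjH φ v z = φ (v (φ.symm z)) := fun z => rfl
  refine ⟨conjH φ v, hconj v hv, ?_, ?_⟩
  · rw [happ, Homeomorph.symm_apply_apply, hfix]
  · intro U hU hxU
    obtain ⟨z, hz, hne⟩ := hnl (φ ⁻¹' U) (hU.preimage φ.continuous) (by simpa using hxU)
    refine ⟨φ z, hz, ?_⟩
    rw [happ, Homeomorph.symm_apply_apply]
    exact fun hc => hne (φ.injective hc)

lemma conj_mem {φ v : Cantor ≃ₜ Cantor} (hφ : NormalizesV φ) (hv : memV v) :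
    memV (conjH φ v) := by
  have := Set.mem_image_of_mem (conjH φ) (show v ∈ {v | memV v} from hv)
  rwa [hφ] at this

lemma conj_symm_mem {φ v : Cantor ≃ₜ Cantor} (hφ : NormalizesV φ) (hv : memV v) :
    memV (conjH φ.symm v) := by
  have : v ∈ (conjH φ) '' {v | memV v} := by rw [hφ]; exact hv
  obtain ⟨v', hv', heq⟩ := this
  apply memV_of_funext (v₂ := v')
  · intro z
    rw [← heq]
    show φ.symm (conjH φ v' (φ.symm.symm z)) = v' z
    simp [conjH]
  · exact hv'

end GoodFix

/-- A homeomorphism of the Cantor space normalizing Thompson's group `V`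
maps the set of eventually periodic (rational) points onto itself. -/
theorem normalizer_maps_rationals_onto_rationals (φ : Cantor ≃ₜ Cantor)
    (hφ : NormalizesV φ) :
    (⇑φ) '' {x | EvPeriodic x} = {x | EvPeriodic x} := by
  apply subset_antisymm
  · rintro _ ⟨x, hx, rfl⟩
    exact evPeriodic_of_goodFix
      (goodFix_map φ (fun v hv => conj_mem hφ hv) (goodFix_of_evPeriodic hx))
  · intro x hx
    refine ⟨φ.symm x, ?_, φ.apply_symm_apply x⟩
    exact evPeriodic_of_goodFix
      (goodFix_map φ.symm (fun v hv => conj_symm_mem hφ hv) (goodFix_of_evPeriodic hx))
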